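/- arXiv:math/0402329 — 2 statements merged into one kernel-verified Lean document; each statement's English description precedes it below -/
import Mathlib

section
/- For the degree-(2d+1) smooth hypersurface V^{2n}(2d+1) ⊂ CP^{2n+1}, the Â-genus equals 2^{-2n}(2d+1)/(2n+1)! · ∏_{k=1}^{n} ((2d+1)² - (2k)²), and for all d ≥ n ≥ 1 this rational number is nonzero and not an integer. -/
open Finset

/-- The Â-genus of the degree-`2d+1` smooth hypersurface `V^{2n}(2d+1) ⊂ ℂP^{2n+1}`:
`2^{-2n}(2d+1)/(2n+1)! ⬝ ∏_{k=1}^n ((2d+1)² - (2k)²)`. -/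
def AhatHypersurface (n d : ℕ) : ℚ :=
  (2 * (d : ℚ) + 1) * (∏ k ∈ Finset.Icc 1 n, ((2 * (d : ℚ) + 1) ^ 2 - (2 * (k : ℚ)) ^ 2)) /
    (2 ^ (2 * n) * (Nat.factorial (2 * n + 1) : ℚ))

/-!
The numerator `(2d+1) ∏ ((2d+1)² - (2k)²)` is a product of odd integers, hence odd and in
particular nonzero, while for `n ≥ 1` the denominator `2^{2n} (2n+1)!` is even. An odd integer
is never an integer multiple of an even one, so the quotient is not an integer.
-/

theorem Int.intCast_div_ne_intCast_of_odd_of_even {a b : ℤ} (ha : Odd a) (hb : Even b)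
    (hb₀ : b ≠ 0) (m : ℤ) : (a : ℚ) / b ≠ m := by
  intro h
  have hab : a = m * b := by
    rw [div_eq_iff (by exact_mod_cast hb₀)] at h
    exact_mod_cast h
  exact Int.not_even_iff_odd.mpr ha (hab ▸ hb.mul_left m)

theorem Finset.odd_prod {ι R : Type*} [CommSemiring R] {s : Finset ι} {f : ι → R}
    (hf : ∀ i ∈ s, Odd (f i)) :
    Odd (∏ i ∈ s, f i) :=
  Finset.prod_induction f Odd (fun _ _ => Odd.mul) odd_one hf

namespace AhatHypersurface

def numerator (n d : ℕ) : ℤ :=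
  (2 * (d : ℤ) + 1) * ∏ k ∈ Icc 1 n, ((2 * (d : ℤ) + 1) ^ 2 - (2 * (k : ℤ)) ^ 2)

def denominator (n : ℕ) : ℤ :=
  2 ^ (2 * n) * (2 * n + 1).factorial

theorem eq_numerator_div_denominator (n d : ℕ) :
    AhatHypersurface n d = (numerator n d : ℚ) / denominator n := by
  simp [AhatHypersurface, numerator, denominator]

theorem odd_numerator (n d : ℕ) : Odd (numerator n d) := by
  have hodd : Odd (2 * (d : ℤ) + 1) := odd_two_mul_add_one _
  refine hodd.mul (Finset.odd_prod fun k _ => hodd.pow.sub_even ?_)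
  exact (even_two_mul _).pow_of_ne_zero two_ne_zero

theorem numerator_ne_zero (n d : ℕ) : numerator n d ≠ 0 := by
  intro h
  exact Int.not_even_iff_odd.mpr (odd_numerator n d) (h ▸ Even.zero)

theorem even_denominator {n : ℕ} (hn : 1 ≤ n) : Even (denominator n) :=
  (even_two.pow_of_ne_zero (by omega)).mul_right _

theorem denominator_ne_zero (n : ℕ) : denominator n ≠ 0 := by
  have := (2 * n + 1).factorial_pos
  unfold denominator
  positivity

end AhatHypersurface

open AhatHypersurface

theorem ahatHypersurface_ne_zero_and_not_integer_general (n d : ℕ) (hn : 1 ≤ n) :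
    AhatHypersurface n d ≠ 0 ∧ ¬∃ m : ℤ, AhatHypersurface n d = (m : ℚ) := by
  rw [eq_numerator_div_denominator]
  refine ⟨div_ne_zero (by exact_mod_cast numerator_ne_zero n d)
    (by exact_mod_cast denominator_ne_zero n), ?_⟩
  rintro ⟨m, hm⟩
  exact Int.intCast_div_ne_intCast_of_odd_of_even (odd_numerator n d) (even_denominator hn)
    (denominator_ne_zero n) m hm

/-- For all `d ≥ n ≥ 1` the Â-genus of `V^{2n}(2d+1)` is a nonzero rational number
which is not an integer. -/
theorem ahatHypersurface_ne_zero_and_not_integer (n d : ℕ) (hn : 1 ≤ n) (hd : n ≤ d) :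
    AhatHypersurface n d ≠ 0 ∧ ¬∃ m : ℤ, AhatHypersurface n d = (m : ℚ) :=
  ahatHypersurface_ne_zero_and_not_integer_general n d hn
end

section
/- Let δ be a linear map on an algebra satisfying δ(ab) = δ(a)b + aδ(b) (a derivation), and let τ be a trace functional with τ(δ(a)) = 0 for all a and τ([a,b]) = 0. If a_t is a smooth family of invertible elements, then d/dt τ(a_t^{-1} δ(a_t)) = 0. -/
/-!
Differentiating `a_t b_t = 1` and applying `δ` to `a b = 1` give the same kind of relation,
`X b + a Y = 0`, which forces `Y = -(b X b)`; hence `ḃ = -b ȧ b` and `δ b = -b (δ a) b`.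
Moving `δ` across the trace (`τ ∘ δ = 0` plus Leibniz) turns `τ(b δȧ)` into
`-τ(δb ȧ) = τ(b δa b ȧ)`, which cancels `τ(ḃ δa) = -τ(b ȧ b δa)` by cyclicity.
-/

theorem eq_neg_mul_mul_of_mul_add_mul_eq_zero {R : Type*} [Ring R] {a b X Y : R}
    (hba : b * a = 1) (h : X * b + a * Y = 0) : Y = -(b * X * b) :=
  calc Y = b * (a * Y) := by rw [← mul_assoc, hba, one_mul]
    _ = -(b * X * b) := by rw [eq_neg_of_add_eq_zero_right h, mul_neg, mul_assoc]

theorem map_one_eq_zero_of_leibniz {R : Type*} [Ring R] {δ : R → R}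
    (hder : ∀ x y : R, δ (x * y) = δ x * y + x * δ y) : δ 1 = 0 := by
  simpa using hder 1 1

theorem trace_mul_derivation_eq_neg {R M : Type*} [Ring R] [AddCommGroup M] {δ : R → R}
    (hder : ∀ x y : R, δ (x * y) = δ x * y + x * δ y) {τ : R →+ M}
    (hτδ : ∀ x : R, τ (δ x) = 0) (x y : R) : τ (x * δ y) = -τ (δ x * y) := by
  rw [eq_neg_iff_add_eq_zero, add_comm, ← map_add, ← hder, hτδ]

theorem trace_mul_derivation_tangent_eq_zero {R M : Type*} [Ring R] [AddCommGroup M]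
    {δ : R → R} (hder : ∀ x y : R, δ (x * y) = δ x * y + x * δ y)
    {τ : R →+ M} (hτδ : ∀ x : R, τ (δ x) = 0) (hτcomm : ∀ x y : R, τ (x * y) = τ (y * x))
    {a b A B : R} (hab : a * b = 1) (hba : b * a = 1) (hAB : A * b + a * B = 0) :
    τ (B * δ a + b * δ A) = 0 := by
  have hδb : δ b = -(b * δ a * b) :=
    eq_neg_mul_mul_of_mul_add_mul_eq_zero hba
      (by rw [← hder, hab, map_one_eq_zero_of_leibniz hder])
  have hB : B = -(b * A * b) := eq_neg_mul_mul_of_mul_add_mul_eq_zero hba hAB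
  have hcycle : τ (b * A * b * δ a) = τ (b * δ a * b * A) := by
    simpa only [mul_assoc] using hτcomm (b * A) (b * δ a)
  rw [map_add, trace_mul_derivation_eq_neg hder hτδ b A, hδb, hB, neg_mul, neg_mul, map_neg,
    map_neg, hcycle, neg_neg, neg_add_cancel]

theorem HasDerivAt.clm_apply_mul_clm_apply {𝒜 F : Type*} [NormedRing 𝒜] [NormedAlgebra ℝ 𝒜]
    [NormedAddCommGroup F] [NormedSpace ℝ F] (δ : 𝒜 →L[ℝ] 𝒜) (τ : 𝒜 →L[ℝ] F)
    {a b : ℝ → 𝒜} {A B : 𝒜} {t : ℝ} (ha : HasDerivAt a A t) (hb : HasDerivAt b B t) :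
    HasDerivAt (fun s => τ (b s * δ (a s))) (τ (B * δ (a t) + b t * δ A)) t :=
  τ.hasFDerivAt.comp_hasDerivAt t (hb.mul (δ.hasFDerivAt.comp_hasDerivAt t ha))

/-- Abstract homotopy-invariance computation: let `𝒜` be a normed algebra over `ℂ`,
`δ` a continuous derivation on `𝒜`, and `τ` a continuous trace functional with
`τ ∘ δ = 0` and `τ` vanishing on commutators.  If `a t` is a differentiable family of
invertible elements with differentiable inverse `b t`, then
`d/dt τ(a_t⁻¹ δ(a_t)) = 0`. -/
theorem deriv_trace_inv_mul_derivation
    (𝒜 : Type*) [NormedRing 𝒜] [NormedAlgebra ℂ 𝒜]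
    (δ : 𝒜 →L[ℂ] 𝒜) (hder : ∀ x y : 𝒜, δ (x * y) = δ x * y + x * δ y)
    (τ : 𝒜 →L[ℂ] ℂ) (hτδ : ∀ x : 𝒜, τ (δ x) = 0)
    (hτcomm : ∀ x y : 𝒜, τ (x * y) = τ (y * x))
    (a b : ℝ → 𝒜)
    (ha : Differentiable ℝ a) (hb : Differentiable ℝ b)
    (hab : ∀ t, a t * b t = 1) (hba : ∀ t, b t * a t = 1) :
    ∀ t : ℝ, deriv (fun s => τ (b s * δ (a s))) t = 0 := by
  intro t
  have hA := (ha t).hasDerivAt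
  have hB := (hb t).hasDerivAt
  have htangent : deriv a t * b t + a t * deriv b t = 0 :=
    (hA.mul hB).unique ((funext hab : a * b = fun _ => 1) ▸ hasDerivAt_const t 1)
  have hderiv :=
    HasDerivAt.clm_apply_mul_clm_apply (δ.restrictScalars ℝ) (τ.restrictScalars ℝ) hA hB
  refine hderiv.deriv.trans ?_
  exact trace_mul_derivation_tangent_eq_zero (τ := (τ : 𝒜 →+ ℂ)) hder hτδ hτcomm
    (hab t) (hba t) htangent
end
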